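/- arXiv:2209.01433 — 4 statements merged into one kernel-verified Lean document; each statement's English description precedes it below -/
import Mathlib

section
/- Let x ∈ ℝⁿ, z ∈ {0,1}ⁿ with ∑ᵢ xᵢ² ≤ 1 and xᵢ(1 - zᵢ) = 0 for all i. Then for every α ∈ ℝⁿ, ∑ᵢ |αᵢxᵢ| ≤ √(∑ᵢ αᵢ² zᵢ). -/
/-!
On the support of `x` we have `z i = 1`, so `x i = x i * √(z i)` for every `i`. Hence
`∑ |α i * x i| = ∑ (|α i| √(z i)) |x i|`, and Cauchy–Schwarz bounds this by
`√(∑ α i ^ 2 * z i) * ‖x‖₂ ≤ √(∑ α i ^ 2 * z i)`.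
-/

open Finset

lemma mul_sqrt_eq_self_of_mul_one_sub_eq_zero {x z : ℝ} (hz : z = 0 ∨ z = 1)
    (hc : x * (1 - z) = 0) : x * √z = x := by
  rcases hz with rfl | rfl
  · simpa [eq_comm] using hc
  · simp

lemma sum_abs_mul_le_sqrt_mul_sqrt {ι : Type*} (s : Finset ι) (α x z : ι → ℝ)
    (hz : ∀ i ∈ s, 0 ≤ z i) (hxz : ∀ i ∈ s, x i * √(z i) = x i) :
    ∑ i ∈ s, |α i * x i| ≤ √(∑ i ∈ s, α i ^ 2 * z i) * √(∑ i ∈ s, x i ^ 2) := by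
  have hsplit : ∀ i ∈ s, |α i * x i| = (|α i| * √(z i)) * |x i| := by
    intro i hi
    conv_lhs => rw [← hxz i hi]
    rw [abs_mul, abs_mul, abs_of_nonneg (Real.sqrt_nonneg _)]
    ring
  calc ∑ i ∈ s, |α i * x i| = ∑ i ∈ s, (|α i| * √(z i)) * |x i| := sum_congr rfl hsplit
    _ ≤ √(∑ i ∈ s, (|α i| * √(z i)) ^ 2) * √(∑ i ∈ s, |x i| ^ 2) :=
        Real.sum_mul_le_sqrt_mul_sqrt _ _ _
    _ = √(∑ i ∈ s, α i ^ 2 * z i) * √(∑ i ∈ s, x i ^ 2) := by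
        congr 2
        · refine sum_congr rfl fun i hi => ?_
          rw [mul_pow, sq_abs, Real.sq_sqrt (hz i hi)]
        · simp only [sq_abs]

theorem stmt_1 (n : ℕ) (x z : Fin n → ℝ) (hz : ∀ i, z i = 0 ∨ z i = 1)
    (hx : ∑ i, (x i)^2 ≤ 1) (hc : ∀ i, x i * (1 - z i) = 0) (α : Fin n → ℝ) :
    ∑ i, |α i * x i| ≤ Real.sqrt (∑ i, (α i)^2 * z i) := by
  have hz_nonneg : ∀ i ∈ univ, 0 ≤ z i := fun i _ => by rcases hz i with h | h <;> simp [h]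
  have hxz : ∀ i ∈ univ, x i * √(z i) = x i := fun i _ =>
    mul_sqrt_eq_self_of_mul_one_sub_eq_zero (hz i) (hc i)
  calc ∑ i, |α i * x i| ≤ √(∑ i, α i ^ 2 * z i) * √(∑ i, x i ^ 2) :=
        sum_abs_mul_le_sqrt_mul_sqrt univ α x z hz_nonneg hxz
    _ ≤ √(∑ i, α i ^ 2 * z i) * 1 :=
        mul_le_mul_of_nonneg_left (Real.sqrt_le_one.mpr hx) (Real.sqrt_nonneg _)
    _ = √(∑ i, α i ^ 2 * z i) := mul_one _
end

section
/- Let x ∈ ℝⁿ and z ∈ ℝⁿ with zᵢ > 0 for all i, and suppose ∑ᵢ xᵢ²/zᵢ > 1. Then setting αᵢ = κ·xᵢ/zᵢ for κ > 0 gives ∑ᵢ |αᵢxᵢ| - √(∑ᵢ αᵢ² zᵢ) = κ·√(∑ᵢ xᵢ²/zᵢ)·(√(∑ᵢ xᵢ²/zᵢ) - 1) > 0, so the supremum over α ∈ ℝⁿ of ∑ᵢ |αᵢxᵢ| - √(∑ᵢ αᵢ² zᵢ) is +∞. -/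
/-!
Choosing `αᵢ = κ xᵢ / zᵢ` makes both sums multiples of `S = ∑ xᵢ² / zᵢ`: the first is `κ S` and the
second is `κ² S`, so the gap is `κ √S (√S - 1)`. It is linear in `κ` with positive slope when
`S > 1`, hence the gaps are unbounded above.
-/

open Finset

section ScaledRatio

variable {ι : Type*} [Fintype ι] (x z : ι → ℝ) (κ : ℝ)

theorem sum_abs_mul_div_mul (hz : ∀ i, 0 ≤ z i) (hκ : 0 ≤ κ) :
    ∑ i, |κ * x i / z i * x i| = κ * ∑ i, x i ^ 2 / z i := by
  rw [mul_sum]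
  refine sum_congr rfl fun i _ => ?_
  rw [show κ * x i / z i * x i = κ * (x i ^ 2 / z i) by ring]
  exact abs_of_nonneg (mul_nonneg hκ (div_nonneg (sq_nonneg _) (hz i)))

theorem sum_sq_mul_div_mul :
    ∑ i, (κ * x i / z i) ^ 2 * z i = κ ^ 2 * ∑ i, x i ^ 2 / z i := by
  rw [mul_sum]
  refine sum_congr rfl fun i _ => ?_
  rcases eq_or_ne (z i) 0 with hzi | hzi
  · simp [hzi]
  · field_simp

theorem sum_abs_mul_div_mul_sub_sqrt (hz : ∀ i, 0 ≤ z i) (hκ : 0 ≤ κ) :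
    ∑ i, |κ * x i / z i * x i| - √(∑ i, (κ * x i / z i) ^ 2 * z i)
      = κ * √(∑ i, x i ^ 2 / z i) * (√(∑ i, x i ^ 2 / z i) - 1) := by
  have hS : 0 ≤ ∑ i, x i ^ 2 / z i := sum_nonneg fun i _ => div_nonneg (sq_nonneg _) (hz i)
  rw [sum_abs_mul_div_mul x z κ hz hκ, sum_sq_mul_div_mul, Real.sqrt_mul (sq_nonneg κ),
    Real.sqrt_sq hκ]
  nth_rewrite 1 [← Real.mul_self_sqrt hS]
  ring

end ScaledRatio

theorem not_bddAbove_of_forall_mul_mem {s : Set ℝ} {c : ℝ} (hc : 0 < c)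
    (hs : ∀ κ, 0 < κ → κ * c ∈ s) : ¬ BddAbove s := by
  rw [not_bddAbove_iff]
  intro b
  refine ⟨(|b| + 1) / c * c, hs _ (by positivity), ?_⟩
  rw [div_mul_cancel₀ _ hc.ne']
  linarith [le_abs_self b]

theorem stmt_11 (n : ℕ) (x z : Fin n → ℝ) (hz : ∀ i, 0 < z i)
    (h : 1 < ∑ i, (x i)^2 / z i) :
    (∀ κ : ℝ, 0 < κ →
      (∑ i, |(κ * x i / z i) * x i|) - Real.sqrt (∑ i, (κ * x i / z i)^2 * z i)
        = κ * Real.sqrt (∑ i, (x i)^2 / z i) * (Real.sqrt (∑ i, (x i)^2 / z i) - 1) ∧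
      0 < κ * Real.sqrt (∑ i, (x i)^2 / z i) * (Real.sqrt (∑ i, (x i)^2 / z i) - 1)) ∧
    ¬ BddAbove {v : ℝ | ∃ α : Fin n → ℝ,
        v = (∑ i, |α i * x i|) - Real.sqrt (∑ i, (α i)^2 * z i)} := by
  have hz' : ∀ i, 0 ≤ z i := fun i => (hz i).le
  have hsqrt : 1 < √(∑ i, x i ^ 2 / z i) := (Real.lt_sqrt zero_le_one).mpr (by simpa using h)
  have hslope : 0 < √(∑ i, x i ^ 2 / z i) * (√(∑ i, x i ^ 2 / z i) - 1) :=
    mul_pos (by linarith) (by linarith)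
  refine ⟨fun κ hκ => ⟨sum_abs_mul_div_mul_sub_sqrt x z κ hz' hκ.le, ?_⟩, ?_⟩
  · rw [mul_assoc]
    exact mul_pos hκ hslope
  · refine not_bddAbove_of_forall_mul_mem hslope fun κ hκ => ⟨fun i => κ * x i / z i, ?_⟩
    rw [sum_abs_mul_div_mul_sub_sqrt x z κ hz' hκ.le, mul_assoc]
end

section
/- Let k be a positive integer with k ≤ n. The convex hull of {(x,z) ∈ ℝⁿ × {0,1}ⁿ : ‖x‖₁ ≤ √(‖z‖₁), ‖z‖₁ = k} equals {(x,z) ∈ ℝⁿ × [0,1]ⁿ : ‖x‖₁ ≤ √k, ‖z‖₁ = k}. -/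
/-! Since `∑ i, z i = k`, the constraint reads `∑ i, |x i| ≤ √k`, so the set is the product of an
ℓ¹-ball with the weight-`k` binary vectors, and convex hulls commute with products. The ℓ¹-ball is
convex. The hull of the binary vectors is the hypersimplex, by Krein–Milman: coordinates summing to
an integer cannot have exactly one fractional entry, and moving mass `±ε` between two fractional
entries writes the point as a midpoint, so every extreme point is binary. -/

open Finset

section

variable {ι : Type*} [Fintype ι]

lemma convex_setOf_sum_abs_le (r : ℝ) : Convex ℝ {x : ι → ℝ | ∑ i, |x i| ≤ r} := by
  simpa [PiLp.norm_eq_of_L1] using ((convexOn_norm convex_univ).comp_linearMap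
    (WithLp.linearEquiv 1 ℝ (ι → ℝ)).symm.toLinearMap).convex_le r

variable (ι) in
def hypersimplex (k : ℕ) : Set (ι → ℝ) :=
  Set.univ.pi (fun _ => Set.Icc 0 1) ∩ {w | ∑ i, w i = k}

lemma mem_hypersimplex {k : ℕ} {w : ι → ℝ} :
    w ∈ hypersimplex ι k ↔ (∀ i, w i ∈ Set.Icc 0 1) ∧ ∑ i, w i = k := by
  simp only [hypersimplex, Set.mem_inter_iff, Set.mem_univ_pi, Set.mem_ofPred_eq]

lemma convex_hypersimplex (k : ℕ) : Convex ℝ (hypersimplex ι k) :=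
  (convex_pi fun _ _ => convex_Icc 0 1).inter <|
    convex_hyperplane ⟨fun _ _ => sum_add_distrib, fun _ _ => (mul_sum ..).symm⟩ _

lemma isCompact_hypersimplex (k : ℕ) : IsCompact (hypersimplex ι k) :=
  (isCompact_univ_pi fun _ => isCompact_Icc).inter_right <|
    isClosed_eq (continuous_finsetSum _ fun i _ => continuous_apply i) continuous_const

lemma eq_zero_or_eq_one_of_sum_eq_natCast {w : ι → ℝ} {k : ℕ} {i : ι} (hwi : w i ∈ Set.Icc 0 1)
    (hw : ∀ j ≠ i, w j = 0 ∨ w j = 1) (hsum : ∑ j, w j = k) : w i = 0 ∨ w i = 1 := by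
  classical
  have hrest : ∑ j ∈ univ.erase i, w j = ((∑ j ∈ univ.erase i, ⌊w j⌋ : ℤ) : ℝ) := by
    push_cast
    refine sum_congr rfl fun j hj => ?_
    rcases hw j (ne_of_mem_erase hj) with h | h <;> simp [h]
  obtain ⟨m, hm⟩ : ∃ m : ℤ, w i = m :=
    ⟨k - ∑ j ∈ univ.erase i, ⌊w j⌋, by
      rw [← add_sum_erase _ _ (mem_univ i), hrest] at hsum; push_cast at hsum ⊢; linarith⟩
  rw [hm] at hwi ⊢
  have : 0 ≤ m ∧ m ≤ 1 := by exact_mod_cast Set.mem_Icc.1 hwi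
  obtain rfl | rfl : m = 0 ∨ m = 1 := by omega
  all_goals simp

lemma add_smul_single_sub_single_mem_hypersimplex [DecidableEq ι] {w : ι → ℝ} {k : ℕ}
    (hw : w ∈ hypersimplex ι k) {i j : ι} (hij : i ≠ j) {t : ℝ} (hi : w i + t ∈ Set.Icc 0 1)
    (hj : w j - t ∈ Set.Icc 0 1) :
    w + t • (Pi.single i 1 - Pi.single j 1) ∈ hypersimplex ι k := by
  rw [mem_hypersimplex] at hw ⊢
  refine ⟨fun l => ?_, ?_⟩
  · rcases eq_or_ne l i with rfl | hli
    · simpa [hij] using hi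
    rcases eq_or_ne l j with rfl | hlj
    · simpa [hli, sub_eq_add_neg] using hj
    simpa [hli, hlj] using hw.1 l
  · simp [sum_add_distrib, ← mul_sum, hw.2]

lemma eq_zero_or_eq_one_of_mem_extremePoints_hypersimplex {w : ι → ℝ} {k : ℕ}
    (hw : w ∈ (hypersimplex ι k).extremePoints ℝ) (i : ι) : w i = 0 ∨ w i = 1 := by
  classical
  by_contra! hi
  obtain ⟨hbox, hsum⟩ := mem_hypersimplex.1 hw.1
  obtain ⟨j, hji, hj⟩ : ∃ j ≠ i, w j ≠ 0 ∧ w j ≠ 1 := by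
    by_contra! h
    simpa [hi] using eq_zero_or_eq_one_of_sum_eq_natCast (hbox i)
      (fun j hj => or_iff_not_imp_left.2 (h j hj)) hsum
  have hwi : 0 < w i ∧ w i < 1 :=
    ⟨(hbox i).1.lt_of_ne' hi.1, (hbox i).2.lt_of_ne hi.2⟩
  have hwj : 0 < w j ∧ w j < 1 :=
    ⟨(hbox j).1.lt_of_ne' hj.1, (hbox j).2.lt_of_ne hj.2⟩
  set ε := min (min (w i) (1 - w i)) (min (w j) (1 - w j))
  have hε : 0 < ε := by simp only [ε, lt_min_iff, sub_pos]; tauto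
  have hεi : ε ≤ w i ∧ ε ≤ 1 - w i := ⟨by simp [ε], by simp [ε]⟩
  have hεj : ε ≤ w j ∧ ε ≤ 1 - w j := ⟨by simp [ε], by simp [ε]⟩
  set d : ι → ℝ := Pi.single i 1 - Pi.single j 1
  have hplus : w + ε • d ∈ hypersimplex ι k :=
    add_smul_single_sub_single_mem_hypersimplex hw.1 hji.symm
      ⟨by linarith, by linarith⟩ ⟨by linarith, by linarith⟩
  have hminus : w + (-ε) • d ∈ hypersimplex ι k :=
    add_smul_single_sub_single_mem_hypersimplex hw.1 hji.symm
      ⟨by linarith, by linarith⟩ ⟨by linarith, by linarith⟩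
  have hmid : w ∈ openSegment ℝ (w + ε • d) (w + (-ε) • d) :=
    ⟨1 / 2, 1 / 2, by norm_num, by norm_num, by norm_num, by ext; simp; ring⟩
  have := congrFun (hw.2 hplus hminus hmid) i
  simp [d, hji] at this
  linarith

lemma convexHull_binary_eq_hypersimplex (k : ℕ) :
    convexHull ℝ {w : ι → ℝ | (∀ i, w i = 0 ∨ w i = 1) ∧ ∑ i, w i = k} = hypersimplex ι k := by
  set V := {w : ι → ℝ | (∀ i, w i = 0 ∨ w i = 1) ∧ ∑ i, w i = k}
  refine (convexHull_min (fun w hw => mem_hypersimplex.2 ⟨fun i => ?_, hw.2⟩)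
    (convex_hypersimplex k)).antisymm ?_
  · rcases hw.1 i with h | h <;> simp [h]
  have hV : V.Finite := (Set.Finite.pi' fun _ => Set.toFinite {0, 1}).subset fun w hw => hw.1
  calc hypersimplex ι k
      = closure (convexHull ℝ ((hypersimplex ι k).extremePoints ℝ)) :=
        (closure_convexHull_extremePoints (isCompact_hypersimplex k) (convex_hypersimplex k)).symm
    _ ⊆ closure (convexHull ℝ V) := closure_mono <| convexHull_mono fun w hw =>
        ⟨eq_zero_or_eq_one_of_mem_extremePoints_hypersimplex hw, (mem_hypersimplex.1 hw.1).2⟩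
    _ = convexHull ℝ V := (hV.isClosed_convexHull ℝ).closure_eq

end

theorem stmt_15_general (n k : ℕ) :
    convexHull ℝ {p : (Fin n → ℝ) × (Fin n → ℝ) |
        (∀ i, p.2 i = 0 ∨ p.2 i = 1) ∧
        (∑ i, |p.1 i|) ≤ Real.sqrt (∑ i, p.2 i) ∧ ∑ i, p.2 i = k}
      = {p : (Fin n → ℝ) × (Fin n → ℝ) |
        (∀ i, 0 ≤ p.2 i ∧ p.2 i ≤ 1) ∧
        (∑ i, |p.1 i|) ≤ Real.sqrt k ∧ ∑ i, p.2 i = k} := by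
  have hvertices : {p : (Fin n → ℝ) × (Fin n → ℝ) |
        (∀ i, p.2 i = 0 ∨ p.2 i = 1) ∧
        (∑ i, |p.1 i|) ≤ Real.sqrt (∑ i, p.2 i) ∧ ∑ i, p.2 i = k}
      = {x : Fin n → ℝ | ∑ i, |x i| ≤ Real.sqrt k} ×ˢ
        {w : Fin n → ℝ | (∀ i, w i = 0 ∨ w i = 1) ∧ ∑ i, w i = k} := by
    ext ⟨x, w⟩
    simp only [Set.mem_ofPred_eq, Set.mem_prod]
    constructor
    · rintro ⟨hbin, hx, hw⟩
      exact ⟨hw ▸ hx, hbin, hw⟩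
    · rintro ⟨hx, hbin, hw⟩
      exact ⟨hbin, hw ▸ hx, hw⟩
  rw [hvertices, convexHull_prod, (convex_setOf_sum_abs_le (ι := Fin n) √k).convexHull_eq,
    convexHull_binary_eq_hypersimplex]
  ext ⟨x, w⟩
  simp only [Set.mem_prod, mem_hypersimplex, Set.mem_Icc, Set.mem_ofPred_eq]
  tauto

theorem stmt_15 (n k : ℕ) (hk : 1 ≤ k) (hkn : k ≤ n) :
    convexHull ℝ {p : (Fin n → ℝ) × (Fin n → ℝ) |
        (∀ i, p.2 i = 0 ∨ p.2 i = 1) ∧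
        (∑ i, |p.1 i|) ≤ Real.sqrt (∑ i, p.2 i) ∧ ∑ i, p.2 i = k}
      = {p : (Fin n → ℝ) × (Fin n → ℝ) |
        (∀ i, 0 ≤ p.2 i ∧ p.2 i ≤ 1) ∧
        (∑ i, |p.1 i|) ≤ Real.sqrt k ∧ ∑ i, p.2 i = k} :=
  stmt_15_general n k
end

section
/- Let a, c ∈ ℝⁿ. The optimal value of min { a'x + c'z : ‖x‖₂² ≤ 1, x∘(1-z)=0, x ∈ ℝⁿ, z ∈ {0,1}ⁿ } equals the minimum of 0 and min over nonempty S ⊆ {1,…,n} of ∑_{i∈S} cᵢ - √(∑_{i∈S} aᵢ²). -/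
/-!
For a fixed support `S = {i | zᵢ = 1}` the problem is the minimisation of the linear form
`∑_{i∈S} aᵢxᵢ` over the unit ball of `ℝ^S`, whose value is `-‖a_S‖₂` by Cauchy–Schwarz, attained
at `x = -a_S / ‖a_S‖₂`. Hence the optimal value is the minimum of
`∑_{i∈S} cᵢ - ‖a_S‖₂` over all supports, and the empty support contributes the value `0`.
-/

open Finset

variable {ι : Type*}

noncomputable def supportValue (a c : ι → ℝ) (S : Finset ι) : ℝ :=
  ∑ i ∈ S, c i - √(∑ i ∈ S, a i ^ 2)

@[simp]
lemma supportValue_empty (a c : ι → ℝ) : supportValue a c ∅ = 0 := by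
  simp [supportValue]

lemma range_supportValue (a c : ι → ℝ) :
    Set.range (supportValue a c) =
      insert 0 {v | ∃ S : Finset ι, S.Nonempty ∧ v = supportValue a c S} := by
  ext v
  constructor
  · rintro ⟨S, rfl⟩
    rcases S.eq_empty_or_nonempty with rfl | hS
    · exact Or.inl (supportValue_empty a c)
    · exact Or.inr ⟨S, hS, rfl⟩
  · rintro (rfl | ⟨S, -, rfl⟩)
    exacts [⟨∅, supportValue_empty a c⟩, ⟨S, rfl⟩]

lemma Real.sInf_insert_zero (s : Set ℝ) : sInf (insert 0 s) = min 0 (sInf s) := by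
  by_cases hs : BddBelow s
  · rcases s.eq_empty_or_nonempty with rfl | hne
    · simp
    · exact csInf_insert hs hne
  · have hs' : ¬BddBelow (insert 0 s) := fun h ↦ hs (h.mono (Set.subset_insert 0 s))
    simp [Real.sInf_of_not_bddBelow hs, Real.sInf_of_not_bddBelow hs']

variable [Fintype ι]

lemma sum_mul_eq_sum_filter_of_binary (c z : ι → ℝ) (hz : ∀ i, z i = 0 ∨ z i = 1)
    [DecidablePred (fun i ↦ z i = 1)] :
    ∑ i, c i * z i = ∑ i with z i = 1, c i := by
  rw [sum_filter]
  refine sum_congr rfl fun i _ ↦ ?_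
  rcases hz i with h | h <;> simp [h]

lemma neg_sqrt_sum_sq_le_sum_mul {a x : ι → ℝ} {S : Finset ι} (hxS : ∀ i ∉ S, x i = 0)
    (hx : ∑ i, x i ^ 2 ≤ 1) :
    -√(∑ i ∈ S, a i ^ 2) ≤ ∑ i, a i * x i := by
  have hsum : ∑ i ∈ S, a i * x i = ∑ i, a i * x i :=
    sum_subset (subset_univ S) fun i _ hi ↦ by simp [hxS i hi]
  have hxS_le : √(∑ i ∈ S, x i ^ 2) ≤ 1 :=
    Real.sqrt_le_one.2 <| (sum_le_sum_of_subset_of_nonneg (subset_univ S)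
      fun i _ _ ↦ sq_nonneg (x i)).trans hx
  have hCS := Real.sum_mul_le_sqrt_mul_sqrt S (fun i ↦ -a i) x
  simp only [neg_mul, sum_neg_distrib, neg_sq] at hCS
  nlinarith [Real.sqrt_nonneg (∑ i ∈ S, a i ^ 2)]

lemma exists_supportValue_le_objective (a c x z : ι → ℝ) (hz : ∀ i, z i = 0 ∨ z i = 1)
    (hx : ∑ i, x i ^ 2 ≤ 1) (hxz : ∀ i, x i * (1 - z i) = 0) :
    ∃ S : Finset ι, supportValue a c S ≤ ∑ i, a i * x i + ∑ i, c i * z i := by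
  classical
  refine ⟨({i | z i = 1} : Finset ι), ?_⟩
  have hxS : ∀ i ∉ ({i | z i = 1} : Finset ι), x i = 0 := fun i hi ↦ by
    have hzi : z i = 0 := (hz i).resolve_right (by simpa using hi)
    simpa [hzi] using hxz i
  rw [supportValue, sum_mul_eq_sum_filter_of_binary c z hz]
  linarith [neg_sqrt_sum_sq_le_sum_mul (a := a) hxS hx]

lemma exists_objective_eq_supportValue (a c : ι → ℝ) (S : Finset ι) :
    ∃ x z : ι → ℝ, (∀ i, z i = 0 ∨ z i = 1) ∧ ∑ i, x i ^ 2 ≤ 1 ∧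
      (∀ i, x i * (1 - z i) = 0) ∧ supportValue a c S = ∑ i, a i * x i + ∑ i, c i * z i := by
  classical
  set t := √(∑ i ∈ S, a i ^ 2)
  have ht : t ^ 2 = ∑ i ∈ S, a i ^ 2 := Real.sq_sqrt (sum_nonneg fun i _ ↦ sq_nonneg (a i))
  -- if `a` vanishes on `S` then `t = 0` and, since `· / 0 = 0`, the witness is `x = 0`
  refine ⟨fun i ↦ if i ∈ S then -a i / t else 0, fun i ↦ if i ∈ S then 1 else 0,
    fun i ↦ by by_cases h : i ∈ S <;> simp [h], ?_, fun i ↦ by by_cases h : i ∈ S <;> simp [h], ?_⟩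
  · calc ∑ i, (if i ∈ S then -a i / t else 0) ^ 2 = t ^ 2 / t ^ 2 := by
          simp only [ite_pow, div_pow, neg_sq, ne_eq, OfNat.ofNat_ne_zero, not_false_eq_true,
            zero_pow, sum_ite_mem, univ_inter, ← sum_div, ht]
      _ ≤ 1 := div_self_le_one _
  · have hax : ∑ i, a i * (if i ∈ S then -a i / t else 0) = -t :=
      calc _ = ∑ i ∈ S, a i * (-a i / t) := by simp only [mul_ite, mul_zero, sum_ite_mem, univ_inter]
        _ = -(t * t) / t := by
          rw [← sq, ht, neg_div, sum_div, ← sum_neg_distrib]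
          exact sum_congr rfl fun i _ ↦ by ring
        _ = -t := by rw [neg_div, mul_self_div_self]
    rw [hax, supportValue]
    simp only [mul_ite, mul_one, mul_zero, sum_ite_mem, univ_inter, t]
    ring

lemma sInf_objective_eq_sInf_range_supportValue (a c : ι → ℝ) :
    sInf {v : ℝ | ∃ x z : ι → ℝ, (∀ i, z i = 0 ∨ z i = 1) ∧ ∑ i, x i ^ 2 ≤ 1 ∧
        (∀ i, x i * (1 - z i) = 0) ∧ v = ∑ i, a i * x i + ∑ i, c i * z i}
      = sInf (Set.range (supportValue a c)) := by
  refine csInf_eq_csInf_of_forall_exists_le ?_ ?_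
  · rintro _ ⟨x, z, hz, hx, hxz, rfl⟩
    obtain ⟨S, hS⟩ := exists_supportValue_le_objective a c x z hz hx hxz
    exact ⟨_, ⟨S, rfl⟩, hS⟩
  · rintro _ ⟨S, rfl⟩
    obtain ⟨x, z, hz, hx, hxz, hS⟩ := exists_objective_eq_supportValue a c S
    exact ⟨_, ⟨x, z, hz, hx, hxz, hS⟩, le_rfl⟩

theorem stmt_16 (n : ℕ) (a c : Fin n → ℝ) :
    sInf {v : ℝ | ∃ x z : Fin n → ℝ, (∀ i, z i = 0 ∨ z i = 1) ∧
        (∑ i, (x i)^2) ≤ 1 ∧ (∀ i, x i * (1 - z i) = 0) ∧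
        v = ∑ i, a i * x i + ∑ i, c i * z i}
      = min 0 (sInf {v : ℝ | ∃ S : Finset (Fin n), S.Nonempty ∧
        v = ∑ i ∈ S, c i - Real.sqrt (∑ i ∈ S, (a i)^2)}) := by
  rw [sInf_objective_eq_sInf_range_supportValue, range_supportValue, Real.sInf_insert_zero]
  rfl
end
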